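/- arXiv:0709.2393 — 2 statements merged into one kernel-verified Lean document; each statement's English description precedes it below -/
import Mathlib

section
/- Let d ≥ 1, let c ∈ ℤ^d with c ≠ 0, let Λ be a real number with Λ ≥ 3, and suppose (a,b) ∈ D_Λ^+(c). Then for every real number t ≥ 0 such that a + tc and b + tc lie in ℤ^d (in particular for every nonnegative integer t), the pair (a + tc, b + tc) also belongs to D_Λ^+(c). -/
/-- The lattice point `a ∈ ℤ^d` viewed as a vector in Euclidean space `ℝ^d`. -/
noncomputable def latt {d : ℕ} (a : Fin d → ℤ) : EuclideanSpace ℝ (Fin d) :=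
  WithLp.toLp 2 (fun i => (a i : ℝ))

/-- The Lipschitz domain `D_Λ^+(c)`: the pair `(a, b)` belongs to it iff there are
`a', b' ∈ ℤ^d` and a real `t ≥ 0` with `a = a' + tc`, `b = b' + tc`,
`|a| ≥ Λ(|a'| + |c|)|c|`, `|b| ≥ Λ(|b'| + |c|)|c|`, and
`|a|/|c| ≥ 2Λ²`, `|b|/|c| ≥ 2Λ²`. -/
def LipDom {d : ℕ} (Λ : ℝ) (c a b : Fin d → ℤ) : Prop :=
  ∃ (a' b' : Fin d → ℤ) (t : ℝ), 0 ≤ t ∧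
    latt a = latt a' + t • latt c ∧
    latt b = latt b' + t • latt c ∧
    Λ * (‖latt a'‖ + ‖latt c‖) * ‖latt c‖ ≤ ‖latt a‖ ∧
    Λ * (‖latt b'‖ + ‖latt c‖) * ‖latt c‖ ≤ ‖latt b‖ ∧
    2 * Λ ^ 2 ≤ ‖latt a‖ / ‖latt c‖ ∧
    2 * Λ ^ 2 ≤ ‖latt b‖ / ‖latt c‖

/-!
Write `x = x' + s c` with `s ≥ 0`. A nonzero lattice vector has `|c| ≥ 1`, so the bound
`|x| ≥ Λ(|x'| + |c|)|c|` with `Λ ≥ 2` gives `2|x'| ≤ |x|`, hence `|x'| ≤ |x| - |x'| ≤ s|c|` and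
`⟨x, c⟩ = ⟨x', c⟩ + s|c|² ≥ 0`. Moving further along `c` therefore does not decrease the norm,
so `x + tc = x' + (s + t)c` satisfies both lower bounds with the same `x'`.
-/

open RealInnerProductSpace

lemma one_le_norm_latt {d : ℕ} {c : Fin d → ℤ} (hc : c ≠ 0) : 1 ≤ ‖latt c‖ := by
  obtain ⟨i, hi⟩ := Function.ne_iff.mp hc
  calc (1 : ℝ) ≤ |(c i : ℝ)| := by exact_mod_cast Int.one_le_abs hi
    _ = ‖latt c i‖ := by simp [latt]
    _ ≤ ‖latt c‖ := PiLp.norm_apply_le _ i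

section InnerProductSpace

variable {E : Type*} [NormedAddCommGroup E] [InnerProductSpace ℝ E]

lemma norm_le_norm_add_smul_of_inner_nonneg {x c : E} {t : ℝ} (ht : 0 ≤ t)
    (hxc : 0 ≤ ⟪x, c⟫) : ‖x‖ ≤ ‖x + t • c‖ := by
  refine le_of_sq_le_sq ?_ (norm_nonneg _)
  rw [norm_add_sq_real, real_inner_smul_right]
  linarith [sq_nonneg ‖t • c‖, mul_nonneg ht hxc]

lemma inner_nonneg_of_two_mul_norm_le {x x' c : E} {s : ℝ} (hs : 0 ≤ s)
    (hx : x = x' + s • c) (h : 2 * ‖x'‖ ≤ ‖x‖) : 0 ≤ ⟪x, c⟫ := by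
  have hx' : ‖x'‖ ≤ s * ‖c‖ := by
    have : ‖x‖ ≤ ‖x'‖ + s * ‖c‖ := by
      simpa only [hx, norm_smul, Real.norm_of_nonneg hs] using norm_add_le x' (s • c)
    linarith
  calc 0 ≤ (s * ‖c‖ - ‖x'‖) * ‖c‖ := mul_nonneg (by linarith) (norm_nonneg c)
    _ = -(‖x'‖ * ‖c‖) + s * ‖c‖ ^ 2 := by ring
    _ ≤ ⟪x', c⟫ + s * ‖c‖ ^ 2 := by
      gcongr
      exact neg_le_of_abs_le (abs_real_inner_le_norm x' c)
    _ = ⟪x, c⟫ := by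
      rw [hx, inner_add_left, real_inner_smul_left, real_inner_self_eq_norm_sq]

lemma lipschitz_bounds_add_smul {x x' c : E} {s t Λ : ℝ} (hΛ : 2 ≤ Λ) (hc : 1 ≤ ‖c‖)
    (hs : 0 ≤ s) (ht : 0 ≤ t) (hx : x = x' + s • c)
    (hlip : Λ * (‖x'‖ + ‖c‖) * ‖c‖ ≤ ‖x‖) (hratio : 2 * Λ ^ 2 ≤ ‖x‖ / ‖c‖) :
    x + t • c = x' + (s + t) • c ∧ Λ * (‖x'‖ + ‖c‖) * ‖c‖ ≤ ‖x + t • c‖ ∧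
      2 * Λ ^ 2 ≤ ‖x + t • c‖ / ‖c‖ := by
  have hx'_le : 2 * ‖x'‖ ≤ ‖x‖ :=
    calc 2 * ‖x'‖ ≤ Λ * ‖x'‖ * 1 := by nlinarith [norm_nonneg x']
      _ ≤ Λ * (‖x'‖ + ‖c‖) * ‖c‖ := by gcongr; linarith [norm_nonneg c]
      _ ≤ ‖x‖ := hlip
  have hgrow := norm_le_norm_add_smul_of_inner_nonneg ht (inner_nonneg_of_two_mul_norm_le hs hx hx'_le)
  refine ⟨by rw [hx, add_smul, add_assoc], hlip.trans hgrow, hratio.trans ?_⟩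
  gcongr

end InnerProductSpace

theorem stmt_5_general {d : ℕ} (c : Fin d → ℤ) (hc : c ≠ 0)
    (Λ : ℝ) (hΛ : 3 ≤ Λ) (a b : Fin d → ℤ) (hab : LipDom Λ c a b)
    (t : ℝ) (ht : 0 ≤ t) (a₂ b₂ : Fin d → ℤ)
    (ha₂ : latt a₂ = latt a + t • latt c) (hb₂ : latt b₂ = latt b + t • latt c) :
    LipDom Λ c a₂ b₂ := by
  obtain ⟨a', b', s, hs, ha, hb, hlipa, hlipb, hratioa, hratiob⟩ := hab
  have hΛ2 : (2 : ℝ) ≤ Λ := by linarith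
  have hc1 := one_le_norm_latt hc
  obtain ⟨ha', hlipa', hratioa'⟩ := lipschitz_bounds_add_smul hΛ2 hc1 hs ht ha hlipa hratioa
  obtain ⟨hb', hlipb', hratiob'⟩ := lipschitz_bounds_add_smul hΛ2 hc1 hs ht hb hlipb hratiob
  rw [← ha₂] at ha' hlipa' hratioa'
  rw [← hb₂] at hb' hlipb' hratiob'
  exact ⟨a', b', s + t, add_nonneg hs ht, ha', hb', hlipa', hlipb', hratioa', hratiob'⟩

/-- Corollary 2.2(ii): if `(a,b) ∈ D_Λ^+(c)` with `Λ ≥ 3`, then for every real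
`t ≥ 0` such that `a + tc` and `b + tc` are again lattice points,
`(a + tc, b + tc) ∈ D_Λ^+(c)`. -/
theorem stmt_5 {d : ℕ} (hd : 1 ≤ d) (c : Fin d → ℤ) (hc : c ≠ 0)
    (Λ : ℝ) (hΛ : 3 ≤ Λ) (a b : Fin d → ℤ) (hab : LipDom Λ c a b)
    (t : ℝ) (ht : 0 ≤ t) (a₂ b₂ : Fin d → ℤ)
    (ha₂ : latt a₂ = latt a + t • latt c) (hb₂ : latt b₂ = latt b + t • latt c) :
    LipDom Λ c a₂ b₂ :=
  stmt_5_general c hc Λ hΛ a b hab t ht a₂ b₂ ha₂ hb₂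
end

section
/- Let d ≥ 2. There exists a constant C > 0, depending only on d, such that for every integer Δ ≥ 1 and all a, b ∈ ℤ^d with a ∼_Δ b, one has |a − b| ≤ C · Δ^{(d+1)!/2}. In other words, the supremum d_Δ of the diameters of all blocks of ∼_Δ is finite and satisfies d_Δ ≤ C · Δ^{(d+1)!/2}. -/
/-- The pre-equivalence relation generating the block decomposition `E_Δ`:
`a ≈ b` iff `|a| = |b|` (equivalently `|a|² = |b|²`) and `|a − b| ≤ Δ`. -/
noncomputable def preRel {d : ℕ} (Δ : ℕ) (a b : Fin d → ℤ) : Prop :=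
  ‖latt a‖ = ‖latt b‖ ∧ ‖latt (a - b)‖ ≤ (Δ : ℝ)

/-!
The points of a block lie on a sphere about the origin and are joined by a chain of steps of
length at most `Δ`; induct on the dimension `k` of the affine span of such a chain.
If `k ≤ 1` the chain lies on a line, which meets the sphere in at most two points, so its
diameter is at most `Δ`. Otherwise cut the chain at the first point where its affine span
reaches dimension `k`: the part before the cut spans less, so by induction its squared diameter
is bounded, and one more step gives a bound `L`. Differences of these points contain a basis `w`
of the affine span; its Gram matrix is integral and invertible, so its determinant is at least
`1`, and Cramer's rule puts every point of the chain within squared distance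
`k * k! * L ^ (k + 1)` of the centre of the sphere cut out on the affine span. Since `L` grows
like `Δ ^ k!`, the squared diameter grows like `Δ ^ (k + 1)!`.
-/

open Module Set Matrix RealInnerProductSpace EuclideanGeometry
open scoped Nat

theorem Relation.ReflTransGen.exists_chain {α : Type*} {r : α → α → Prop} {a b : α}
    (h : Relation.ReflTransGen r a b) :
    ∃ (n : ℕ) (x : ℕ → α), x 0 = a ∧ x n = b ∧ ∀ i < n, r (x i) (x (i + 1)) := by
  induction h using Relation.ReflTransGen.head_induction_on with
  | refl => exact ⟨0, fun _ => b, rfl, rfl, fun i hi => absurd hi (Nat.not_lt_zero _)⟩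
  | head hac _ ih =>
    obtain ⟨n, x, hx0, hxn, hx⟩ := ih
    refine ⟨n + 1, fun | 0 => _ | i + 1 => x i, rfl, hxn, ?_⟩
    rintro (_ | i) hi
    · simpa [hx0] using hac
    · exact hx i (by omega)

theorem EuclideanGeometry.Cospherical.eq_or_eq_of_collinear {V P : Type*} [NormedAddCommGroup V]
    [InnerProductSpace ℝ V] [MetricSpace P] [NormedAddTorsor V P] {s : Set P}
    (hs : Cospherical s) (hc : Collinear ℝ s) {p q r : P} (hp : p ∈ s) (hq : q ∈ s) (hr : r ∈ s)
    (hpq : p ≠ q) : r = p ∨ r = q := by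
  by_contra! h
  exact affineIndependent_iff_not_collinear_set.1
    (hs.affineIndependent_of_mem_of_ne hp hq hr hpq h.1.symm h.2.symm)
    (hc.subset (by simp [Set.insert_subset_iff, hp, hq, hr]))

theorem sq_norm_sub_le_two_mul_add {E : Type*} [SeminormedAddCommGroup E] (a b c : E) :
    ‖a - c‖ ^ 2 ≤ 2 * (‖a - b‖ ^ 2 + ‖b - c‖ ^ 2) :=
  (pow_le_pow_left₀ (norm_nonneg _) (norm_sub_le_norm_sub_add_norm_sub a b c) 2).trans add_sq_le

theorem sq_norm_sub_le_of_succ {E : Type*} [SeminormedAddCommGroup E] {x : ℕ → E} {t : ℕ}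
    {M Δ : ℝ} (hM : ∀ i ≤ t, ∀ j ≤ t, ‖x i - x j‖ ^ 2 ≤ M) (hstep : ‖x (t + 1) - x t‖ ≤ Δ)
    {i j : ℕ} (hi : i ≤ t + 1) (hj : j ≤ t + 1) : ‖x i - x j‖ ^ 2 ≤ 2 * (M + Δ ^ 2) := by
  have hM₀ : 0 ≤ M := by simpa using hM t le_rfl t le_rfl
  have hstep₂ := pow_le_pow_left₀ (norm_nonneg _) hstep 2
  have key : ∀ i ≤ t + 1, ∀ j ≤ t, ‖x i - x j‖ ^ 2 ≤ 2 * (M + Δ ^ 2) := by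
    intro i hi j hj
    rcases (show i ≤ t ∨ i = t + 1 by omega) with hi | rfl
    · nlinarith [hM i hi j hj]
    · nlinarith [sq_norm_sub_le_two_mul_add (x (t + 1)) (x t) (x j), hM t le_rfl j hj]
  rcases (show j ≤ t ∨ j = t + 1 by omega) with hj | rfl
  · exact key i hi j hj
  rcases (show i ≤ t ∨ i = t + 1 by omega) with hi | rfl
  · rw [norm_sub_rev]; exact key _ le_rfl i hi
  · simp; positivity

theorem Matrix.abs_cramer_apply_le {R ι : Type*} [CommRing R] [LinearOrder R]
    [IsStrictOrderedRing R] [Fintype ι] [DecidableEq ι] {A : Matrix ι ι R} {b : ι → R} {L : R}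
    (hA : ∀ i j, |A i j| ≤ L) (hb : ∀ i, |b i| ≤ L) (i : ι) :
    |cramer A b i| ≤ (Fintype.card ι)! * L ^ Fintype.card ι := by
  rw [cramer_apply]
  simpa using det_le (abv := AbsoluteValue.abs) (A := A.updateCol i b) fun k l => by
    rw [updateCol_apply]; split_ifs
    exacts [hb k, hA k l]

section
variable {E : Type*} [NormedAddCommGroup E] [InnerProductSpace ℝ E]

theorem one_le_abs_det_gram {ι : Type*} [Fintype ι] [DecidableEq ι] {w : ι → E}
    (hw : LinearIndependent ℝ w) (hint : ∀ i j, ∃ z : ℤ, ⟪w i, w j⟫ = z) :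
    1 ≤ |(gram ℝ w).det| := by
  choose z hz using hint
  have hG : gram ℝ w = (Matrix.of z).map (Int.cast : ℤ → ℝ) := by ext i j; simp [hz]
  have hne := det_gram_ne_zero_iff_linearIndependent.2 hw
  rw [hG, ← Int.cast_det] at hne ⊢
  rw [← Int.cast_abs]
  exact_mod_cast Int.one_le_abs (by exact_mod_cast hne)

theorem inner_sum_smul_eq_gram_mulVec {ι : Type*} [Fintype ι] (w : ι → E) (α : ι → ℝ) (i : ι) :
    ⟪w i, ∑ j, α j • w j⟫ = (gram ℝ w *ᵥ α) i := by
  simp [inner_sum, real_inner_smul_right, mulVec, dotProduct, mul_comm]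

theorem exists_mem_orthogonal_add_sq_norm_le {ι : Type*} [Fintype ι] [DecidableEq ι] {w : ι → E}
    (hw : LinearIndependent ℝ w) (hint : ∀ i j, ∃ z : ℤ, ⟪w i, w j⟫ = z) {L : ℝ}
    (hL : ∀ i, ‖w i‖ ^ 2 ≤ L) {x₀ : E} (hx₀ : ∀ i, ‖x₀ + w i‖ = ‖x₀‖) :
    ∃ u ∈ Submodule.span ℝ (range w), x₀ + u ∈ (Submodule.span ℝ (range w))ᗮ ∧
      ‖u‖ ^ 2 ≤ Fintype.card ι * (Fintype.card ι)! * L ^ (Fintype.card ι + 1) := by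
  set G := gram ℝ w
  -- `x₀ + u` with `u = ∑ j, α j • w j` is orthogonal to every `w i` exactly when `G *ᵥ α = m`
  set m : ι → ℝ := fun i => ‖w i‖ ^ 2 / 2 with hm_def
  set α : ι → ℝ := (G.det)⁻¹ • cramer G m
  have hGα : G *ᵥ α = m := by
    have hdet : G.det ≠ 0 := det_gram_ne_zero_iff_linearIndependent.2 hw
    simp only [α, mulVec_smul, mulVec_cramer, smul_smul, inv_mul_cancel₀ hdet, one_smul]
  have hm : ∀ i, |m i| ≤ L := fun i => by
    rw [hm_def, abs_of_nonneg (by positivity)]; linarith [hL i, sq_nonneg ‖w i‖]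
  -- Cauchy–Schwarz and AM-GM bound the Gram entries
  have hG : ∀ i j, |G i j| ≤ L := fun i j => by
    refine (abs_real_inner_le_norm _ _).trans ?_
    nlinarith [hL i, hL j, two_mul_le_add_sq ‖w i‖ ‖w j‖]
  have hα : ∀ i, |α i| ≤ (Fintype.card ι)! * L ^ Fintype.card ι := fun i =>
    calc |α i| = |cramer G m i| / |G.det| := by simp [α, abs_mul, div_eq_inv_mul]
      _ ≤ |cramer G m i| := div_le_self (abs_nonneg _) (one_le_abs_det_gram hw hint)
      _ ≤ _ := abs_cramer_apply_le hG hm i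
  set u := ∑ j, α j • w j
  have hwu : ∀ i, ⟪w i, u⟫ = m i := fun i => by
    rw [inner_sum_smul_eq_gram_mulVec, hGα]
  refine ⟨u, Submodule.sum_smul_mem _ α fun j _ => Submodule.subset_span (mem_range_self j), ?_, ?_⟩
  · rw [Submodule.mem_orthogonal]
    intro v hv
    refine Submodule.mem_orthogonal_singleton_iff_inner_left.1 (Submodule.span_le.2 ?_ hv)
    rintro _ ⟨i, rfl⟩
    have hsphere := congrArg (· ^ 2) (hx₀ i)
    simp only [norm_add_sq_real] at hsphere
    rw [SetLike.mem_coe, Submodule.mem_orthogonal_singleton_iff_inner_left, inner_add_right, hwu,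
      real_inner_comm, hm_def]
    linarith
  · calc ‖u‖ ^ 2 = ⟪∑ j, α j • w j, u⟫ := (real_inner_self_eq_norm_sq u).symm
      _ = ∑ j, α j * m j := by simp only [sum_inner, real_inner_smul_left, hwu]
      _ ≤ ∑ _j : ι, (Fintype.card ι)! * L ^ Fintype.card ι * L := Finset.sum_le_sum fun j _ => by
          have hL₀ : 0 ≤ L := (sq_nonneg _).trans (hL j)
          calc α j * m j ≤ |α j| * |m j| := (le_abs_self _).trans (abs_mul _ _).le
            _ ≤ _ := mul_le_mul (hα j) (hm j) (abs_nonneg _) (by positivity)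
      _ = _ := by simp; ring

theorem norm_sub_eq_of_add_mem_orthogonal {V : Submodule ℝ E} {x₀ u y : E} (hu : u ∈ V)
    (hc : x₀ + u ∈ Vᗮ) (hy : y - x₀ ∈ V) (hyn : ‖y‖ = ‖x₀‖) : ‖y - (x₀ + u)‖ = ‖u‖ := by
  have h₁ : ⟪y - (x₀ + u), x₀ + u⟫ = 0 := Submodule.inner_right_of_mem_orthogonal
    (by simpa [sub_add_eq_sub_sub] using V.sub_mem hy hu) hc
  have h₂ : ⟪-u, x₀ + u⟫ = 0 := Submodule.inner_right_of_mem_orthogonal (V.neg_mem hu) hc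
  have hy' := norm_add_sq_real (y - (x₀ + u)) (x₀ + u)
  have hx₀ := norm_add_sq_real (-u) (x₀ + u)
  rw [sub_add_cancel, h₁] at hy'
  rw [neg_add_eq_sub, add_sub_cancel_right, h₂, norm_neg] at hx₀
  exact (sq_eq_sq₀ (norm_nonneg _) (norm_nonneg _)).1 (by rw [hyn] at hy'; linarith)

theorem exists_intCast_inner_sub_sub {s : Set E} (hint : ∀ p ∈ s, ∀ q ∈ s, ∃ z : ℤ, ⟪p, q⟫ = z)
    {p₀ p q : E} (hp₀ : p₀ ∈ s) (hp : p ∈ s) (hq : q ∈ s) : ∃ z : ℤ, ⟪p - p₀, q - p₀⟫ = z := by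
  obtain ⟨z₁, h₁⟩ := hint p hp q hq
  obtain ⟨z₂, h₂⟩ := hint p hp p₀ hp₀
  obtain ⟨z₃, h₃⟩ := hint p₀ hp₀ q hq
  obtain ⟨z₄, h₄⟩ := hint p₀ hp₀ p₀ hp₀
  exact ⟨z₁ - z₂ - z₃ + z₄, by
    simp only [inner_sub_left, inner_sub_right, h₁, h₂, h₃, h₄]; push_cast; ring⟩

theorem exists_sq_norm_sub_le_of_vectorSpan_le [FiniteDimensional ℝ E] {s s₀ : Set E}
    {ρ L : ℝ} {r : ℕ} (hs : ∀ p ∈ s, ‖p‖ = ρ) (hint : ∀ p ∈ s, ∀ q ∈ s, ∃ z : ℤ, ⟪p, q⟫ = z)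
    (hs₀ : s₀ ⊆ s) (hspan : vectorSpan ℝ s ≤ vectorSpan ℝ s₀)
    (hr : finrank ℝ (vectorSpan ℝ s) = r) (hL : ∀ p ∈ s₀, ∀ q ∈ s₀, ‖p - q‖ ^ 2 ≤ L) {p₀ : E}
    (hp₀ : p₀ ∈ s₀) : ∃ c : E, ∀ p ∈ s, ‖p - c‖ ^ 2 ≤ r * r ! * L ^ (r + 1) := by
  classical
  obtain ⟨b, hbsub, hbspan, hbind⟩ := exists_linearIndependent ℝ ((· -ᵥ p₀) '' s₀)
  have := hbind.setFinite.fintype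
  have hV : Submodule.span ℝ (range ((↑) : b → E)) = vectorSpan ℝ s := by
    rw [Subtype.range_coe, hbspan, ← vectorSpan_eq_span_vsub_set_right ℝ hp₀]
    exact le_antisymm (vectorSpan_mono ℝ hs₀) hspan
  have hcard : Fintype.card b = r := by rw [← finrank_span_eq_card hbind, hV, hr]
  have hb : ∀ v : b, ∃ p₁ ∈ s₀, (v : E) = p₁ - p₀ := fun v => by
    obtain ⟨p₁, hp₁, hv⟩ := hbsub v.2
    exact ⟨p₁, hp₁, hv.symm⟩
  have hint_b : ∀ v v' : b, ∃ z : ℤ, ⟪(v : E), v'⟫ = z := fun v v' => by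
    obtain ⟨p₁, hp₁, hv⟩ := hb v
    obtain ⟨p₂, hp₂, hv'⟩ := hb v'
    rw [hv, hv']
    exact exists_intCast_inner_sub_sub hint (hs₀ hp₀) (hs₀ hp₁) (hs₀ hp₂)
  obtain ⟨u, hu, hc, hu_le⟩ := exists_mem_orthogonal_add_sq_norm_le hbind hint_b
    (L := L) (fun v => by obtain ⟨p₁, hp₁, hv⟩ := hb v; rw [hv]; exact hL _ hp₁ _ hp₀)
    (x₀ := p₀) (fun v => by
      obtain ⟨p₁, hp₁, hv⟩ := hb v
      rw [hv, add_sub_cancel, hs _ (hs₀ hp₁), hs _ (hs₀ hp₀)])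
  rw [hcard] at hu_le
  rw [hV] at hu hc
  refine ⟨p₀ + u, fun y hy => ?_⟩
  rwa [norm_sub_eq_of_add_mem_orthogonal hu hc (vsub_mem_vectorSpan ℝ hy (hs₀ hp₀))
    (by rw [hs _ hy, hs _ (hs₀ hp₀)])]

theorem norm_sub_le_of_collinear_image_Iic {x : ℕ → E} {n : ℕ} {ρ Δ : ℝ} (hΔ : 0 ≤ Δ)
    (hsphere : ∀ i ≤ n, ‖x i‖ = ρ) (hstep : ∀ i < n, ‖x (i + 1) - x i‖ ≤ Δ)
    (hc : Collinear ℝ (x '' Iic n)) {i j : ℕ} (hi : i ≤ n) (hj : j ≤ n) :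
    ‖x i - x j‖ ≤ Δ := by
  by_cases hconst : ∀ l < n, x (l + 1) = x l
  · have hx : ∀ l ≤ n, x l = x 0 := fun l => by
      induction l with
      | zero => simp
      | succ l ih => intro hl; rw [hconst l hl, ih (by omega)]
    simp [hx i hi, hx j hj, hΔ]
  push Not at hconst
  obtain ⟨l, hl, hne⟩ := hconst
  have hcos : Cospherical (x '' Iic n) :=
    ⟨0, ρ, by rintro _ ⟨m, hm, rfl⟩; simpa using hsphere m hm⟩
  -- a line meets a sphere in at most two points, here `x l` and `x (l + 1)`
  have htwo : ∀ m ≤ n, x m = x (l + 1) ∨ x m = x l := fun m hm =>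
    hcos.eq_or_eq_of_collinear hc ⟨l + 1, hl, rfl⟩ ⟨l, hl.le, rfl⟩ ⟨m, hm, rfl⟩ hne
  have hstep' : ‖x l - x (l + 1)‖ ≤ Δ := norm_sub_rev (x l) _ ▸ hstep l hl
  rcases htwo i hi with h | h <;> rcases htwo j hj with h' | h' <;>
    simp [h, h', hΔ, hstep l hl, hstep']

theorem exists_finrank_vectorSpan_image_Iic_jump (x : ℕ → E) {k n : ℕ}
    (hk : k < finrank ℝ (vectorSpan ℝ (x '' Iic n))) :
    ∃ t < n, finrank ℝ (vectorSpan ℝ (x '' Iic t)) ≤ k ∧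
      k < finrank ℝ (vectorSpan ℝ (x '' Iic (t + 1))) := by
  classical
  have hex : ∃ t, k < finrank ℝ (vectorSpan ℝ (x '' Iic t)) := ⟨n, hk⟩
  obtain ⟨t, ht⟩ : ∃ t, Nat.find hex = t + 1 := Nat.exists_eq_add_one_of_ne_zero fun h0 => by
    have := Nat.find_spec hex
    rw [h0, show Iic 0 = {0} from Iic_bot, image_singleton, vectorSpan_singleton,
      finrank_bot] at this
    exact Nat.not_lt_zero _ this
  have hmin := Nat.find_min hex (show t < Nat.find hex by omega)
  have hle := Nat.find_min' hex hk
  exact ⟨t, by omega, by omega, ht ▸ Nat.find_spec hex⟩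
end

/-- A bound for the squared diameter of a chain whose affine span has dimension at most `k`.
The recursive case is `4 * k * k! * L ^ (k + 1)`, four times the squared circumradius bound of
`exists_mem_orthogonal_add_sq_norm_le`, where `L` bounds a shorter chain plus one step. -/
noncomputable def diamBound (Δ : ℝ) : ℕ → ℝ
  | 0 => 0
  | 1 => Δ ^ 2
  | k + 2 => 4 * (k + 2) * (k + 2)! * (2 * (diamBound Δ (k + 1) + Δ ^ 2)) ^ (k + 3)

theorem diamBound_nonneg (Δ : ℝ) : ∀ k, 0 ≤ diamBound Δ k
  | 0 => le_rfl
  | 1 => sq_nonneg Δ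
  | k + 2 => by have := diamBound_nonneg Δ (k + 1); rw [diamBound]; positivity

theorem diamBound_le_succ {Δ : ℝ} (hΔ : 1 ≤ Δ) : ∀ k, diamBound Δ k ≤ diamBound Δ (k + 1)
  | 0 => sq_nonneg Δ
  | k + 1 => by
    set L := 2 * (diamBound Δ (k + 1) + Δ ^ 2)
    have hL : 1 ≤ L := by nlinarith [diamBound_nonneg Δ (k + 1)]
    calc diamBound Δ (k + 1) ≤ L := by nlinarith [diamBound_nonneg Δ (k + 1)]
      _ ≤ L ^ (k + 3) := le_self_pow₀ hL (by omega)
      _ ≤ 4 * (k + 2) * (k + 2)! * L ^ (k + 3) := by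
        have : (1 : ℝ) ≤ 4 * (k + 2) * (k + 2)! := by
          have : (1 : ℝ) ≤ (k + 2)! := Nat.one_le_cast.2 (Nat.factorial_pos _)
          nlinarith
        nlinarith [pow_nonneg (zero_le_one.trans hL) (k + 3)]

theorem exists_diamBound_le (k : ℕ) :
    ∃ B > 0, ∀ Δ : ℝ, 1 ≤ Δ → diamBound Δ k ≤ B * Δ ^ (k + 1)! := by
  induction k with
  | zero => exact ⟨1, one_pos, fun Δ hΔ => by simp [diamBound]; positivity⟩
  | succ k ih =>
    rcases k with _ | k
    · exact ⟨1, one_pos, fun Δ _ => by simp [diamBound]⟩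
    obtain ⟨B, hB, hbound⟩ := ih
    refine ⟨4 * (k + 2) * (k + 2)! * (2 * B + 2) ^ (k + 3), by positivity, fun Δ hΔ => ?_⟩
    have hΔsq : Δ ^ 2 ≤ Δ ^ (k + 2)! :=
      pow_le_pow_right₀ hΔ ((by omega : 2 ≤ k + 2).trans (Nat.self_le_factorial _))
    have hL : 2 * (diamBound Δ (k + 1) + Δ ^ 2) ≤ (2 * B + 2) * Δ ^ (k + 2)! := by
      nlinarith [hbound Δ hΔ]
    calc diamBound Δ (k + 2)
        ≤ 4 * (k + 2) * (k + 2)! * ((2 * B + 2) * Δ ^ (k + 2)!) ^ (k + 3) := by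
          rw [diamBound]
          gcongr
          have := diamBound_nonneg Δ (k + 1)
          positivity
      _ = 4 * (k + 2) * (k + 2)! * (2 * B + 2) ^ (k + 3) * Δ ^ (k + 3)! := by
          rw [mul_pow, ← pow_mul, Nat.factorial_succ (k + 2)]
          ring_nf

section
variable {E : Type*} [NormedAddCommGroup E] [InnerProductSpace ℝ E] [FiniteDimensional ℝ E]
  {x : ℕ → E} {ρ Δ : ℝ}

theorem sq_norm_sub_le_diamBound (hΔ : 1 ≤ Δ) (hint : ∀ i j, ∃ z : ℤ, ⟪x i, x j⟫ = z) :
    ∀ k n, (∀ i ≤ n, ‖x i‖ = ρ) → (∀ i < n, ‖x (i + 1) - x i‖ ≤ Δ) →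
      finrank ℝ (vectorSpan ℝ (x '' Iic n)) ≤ k →
      ∀ i ≤ n, ∀ j ≤ n, ‖x i - x j‖ ^ 2 ≤ diamBound Δ k
  | 0, n, _, _, hk, i, hi, j, hj => by
    have hsingle := (vectorSpan_eq_bot_iff_subsingleton ℝ).1
      (Submodule.finrank_eq_zero.1 (Nat.le_zero.1 hk))
    simp [hsingle ⟨i, hi, rfl⟩ ⟨j, hj, rfl⟩, diamBound]
  | 1, n, hsphere, hstep, hk, i, hi, j, hj => by
    have hc : Collinear ℝ (x '' Iic n) := collinear_iff_finrank_le_one.2 hk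
    have := norm_sub_le_of_collinear_image_Iic (by linarith) hsphere hstep hc hi hj
    rw [diamBound]
    exact pow_le_pow_left₀ (norm_nonneg _) this 2
  | k + 2, n, hsphere, hstep, hk, i, hi, j, hj => by
    by_cases hk' : finrank ℝ (vectorSpan ℝ (x '' Iic n)) ≤ k + 1
    · exact (sq_norm_sub_le_diamBound hΔ hint (k + 1) n hsphere hstep hk' i hi j hj).trans
        (diamBound_le_succ hΔ _)
    obtain ⟨t, htn, ht, ht'⟩ := exists_finrank_vectorSpan_image_Iic_jump x (not_le.1 hk')
    have hsub : x '' Iic (t + 1) ⊆ x '' Iic n := image_mono (Iic_subset_Iic.2 htn)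
    have hspan : vectorSpan ℝ (x '' Iic n) ≤ vectorSpan ℝ (x '' Iic (t + 1)) :=
      (Submodule.eq_of_le_of_finrank_le (vectorSpan_mono ℝ hsub) (by omega)).ge
    have hprefix := sq_norm_sub_le_diamBound hΔ hint (k + 1) t
      (fun i hi => hsphere i (by omega)) (fun i hi => hstep i (by omega)) ht
    obtain ⟨c, hc⟩ := exists_sq_norm_sub_le_of_vectorSpan_le (r := k + 2)
      (by rintro _ ⟨m, hm, rfl⟩; exact hsphere m hm)
      (by rintro _ ⟨a, -, rfl⟩ _ ⟨b, -, rfl⟩; exact hint a b) hsub hspan (by omega)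
      (by rintro _ ⟨a, ha, rfl⟩ _ ⟨b, hb, rfl⟩
          exact sq_norm_sub_le_of_succ hprefix (hstep t htn) ha hb)
      ⟨0, Nat.zero_le _, rfl⟩
    have hc' : ∀ m ≤ n, ‖x m - c‖ ^ 2 ≤
        (k + 2) * (k + 2)! * (2 * (diamBound Δ (k + 1) + Δ ^ 2)) ^ (k + 3) := fun m hm => by
      exact_mod_cast hc _ ⟨m, hm, rfl⟩
    calc ‖x i - x j‖ ^ 2 ≤ 2 * (‖x i - c‖ ^ 2 + ‖c - x j‖ ^ 2) := sq_norm_sub_le_two_mul_add _ _ _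
      _ ≤ diamBound Δ (k + 2) := by
        rw [norm_sub_rev c, diamBound]
        linarith [hc' i hi, hc' j hj]
end

section
variable {d : ℕ}

theorem latt_sub (a b : Fin d → ℤ) : latt (a - b) = latt a - latt b := by
  ext i; simp [latt]

theorem inner_latt (a b : Fin d → ℤ) : ⟪latt a, latt b⟫ = ((∑ i, a i * b i : ℤ) : ℝ) := by
  simp [latt, PiLp.inner_apply, mul_comm]

theorem preRel_symm {Δ : ℕ} {a b : Fin d → ℤ} (h : preRel Δ a b) : preRel Δ b a :=
  ⟨h.1.symm, by rw [latt_sub, norm_sub_rev, ← latt_sub]; exact h.2⟩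

theorem exists_latt_chain_of_eqvGen {Δ : ℕ} {a b : Fin d → ℤ}
    (h : Relation.EqvGen (preRel Δ) a b) :
    ∃ (n : ℕ) (x : ℕ → Fin d → ℤ), x 0 = a ∧ x n = b ∧ (∀ i ≤ n, ‖latt (x i)‖ = ‖latt a‖) ∧
      ∀ i < n, ‖latt (x (i + 1)) - latt (x i)‖ ≤ Δ := by
  have : Std.Symm (preRel (d := d) Δ) := ⟨fun _ _ => preRel_symm⟩
  rw [Relation.EqvGen.eqvGen_eq_reflTransGen] at h
  obtain ⟨n, x, rfl, rfl, hx⟩ := h.exists_chain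
  refine ⟨n, x, rfl, rfl, fun i hi => ?_, fun i hi => ?_⟩
  · induction i with
    | zero => rfl
    | succ i ih => rw [← (hx i hi).1, ih (by omega)]
  · rw [norm_sub_rev, ← latt_sub]; exact (hx i hi).2
end

theorem stmt_9_general (d : ℕ) :
    ∃ C : ℝ, 0 < C ∧ ∀ Δ : ℕ, 1 ≤ Δ →
      ∀ a b : Fin d → ℤ, Relation.EqvGen (preRel Δ) a b →
        ‖latt (a - b)‖ ≤ C * (Δ : ℝ) ^ ((Nat.factorial (d + 1) : ℝ) / 2) := by
  obtain ⟨B, hB, hbound⟩ := exists_diamBound_le d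
  refine ⟨√B, by positivity, fun Δ hΔ a b hab => ?_⟩
  obtain ⟨n, x, rfl, rfl, hsphere, hstep⟩ := exists_latt_chain_of_eqvGen hab
  have hΔ' : (1 : ℝ) ≤ Δ := by exact_mod_cast hΔ
  have hrank : finrank ℝ (vectorSpan ℝ ((latt ∘ x) '' Iic n)) ≤ d :=
    (Submodule.finrank_le _).trans finrank_euclideanSpace_fin.le
  have hdiam := sq_norm_sub_le_diamBound hΔ' (fun i j => ⟨_, inner_latt (x i) (x j)⟩) d n
    hsphere hstep hrank 0 (Nat.zero_le n) n le_rfl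
  rw [latt_sub]
  calc ‖latt (x 0) - latt (x n)‖ = √(‖latt (x 0) - latt (x n)‖ ^ 2) :=
        (Real.sqrt_sq (norm_nonneg _)).symm
    _ ≤ √(B * Δ ^ (d + 1)!) := Real.sqrt_le_sqrt (hdiam.trans (hbound Δ hΔ'))
    _ = √B * (Δ : ℝ) ^ (((d + 1)! : ℕ) / 2 : ℝ) := by
        rw [Real.sqrt_mul hB.le, Real.sqrt_eq_rpow ((Δ : ℝ) ^ _), ← Real.rpow_natCast,
          ← Real.rpow_mul (by positivity), mul_one_div]

/-- Uniform block-diameter bound (Section 4): there is `C > 0` depending only on `d`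
such that for every `Δ ≥ 1` and all `a ∼_Δ b` one has `|a − b| ≤ C Δ^{(d+1)!/2}`;
i.e. `d_Δ ≤ C Δ^{(d+1)!/2}`. -/
theorem stmt_9 (d : ℕ) (hd : 2 ≤ d) :
    ∃ C : ℝ, 0 < C ∧ ∀ Δ : ℕ, 1 ≤ Δ →
      ∀ a b : Fin d → ℤ, Relation.EqvGen (preRel Δ) a b →
        ‖latt (a - b)‖ ≤ C * (Δ : ℝ) ^ ((Nat.factorial (d + 1) : ℝ) / 2) :=
  stmt_9_general d
end
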